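/- arXiv:1605.02228 — 3 statements merged into one kernel-verified Lean document; each statement's English description precedes it below -/
import Mathlib

section
/- If G is a finite group with Φ(G) = 1, then F(G) ∩ E(G) = 1, where E(G) is the layer (the product of all components) and F(G) the Fitting subgroup; consequently the generalised Fitting subgroup F*(G) is the (internal) direct product F(G) × E(G). -/
open Subgroup

/-- A subgroup `H` of `G` is subnormal if there is a chain of subgroups from `H` to `G`,
each normal in the next. -/
def IsSubnormal {G : Type*} [Group G] (H : Subgroup G) : Prop :=
  ∃ (n : ℕ) (c : ℕ → Subgroup G), c 0 = H ∧ c n = ⊤ ∧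
    ∀ i, c i ≤ c (i + 1) ∧ ((c i).subgroupOf (c (i + 1))).Normal

/-- A group is quasi-simple if it is perfect and its central quotient is simple. -/
def IsQuasiSimple (Q : Type*) [Group Q] : Prop :=
  commutator Q = ⊤ ∧ IsSimpleGroup (Q ⧸ Subgroup.center Q)

/-- A component of `G` is a subnormal quasi-simple subgroup. -/
def IsComponent {G : Type*} [Group G] (Q : Subgroup G) : Prop :=
  _root_.IsSubnormal Q ∧ IsQuasiSimple Q

/-- The layer `E(G)`: the subgroup generated by all components of `G`. -/
def layer (G : Type*) [Group G] : Subgroup G :=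
  Subgroup.closure {x | ∃ Q : Subgroup G, IsComponent Q ∧ x ∈ Q}

/-- The Fitting subgroup `F(G)`: the subgroup generated by all nilpotent normal
subgroups of `G`. -/
def fitting (G : Type*) [Group G] : Subgroup G :=
  Subgroup.normalClosure {x | ∃ N : Subgroup G, N.Normal ∧ Group.IsNilpotent N ∧ x ∈ N}

/-- The generalised Fitting subgroup `F*(G) = F(G) E(G)`. -/
def genFitting (G : Type*) [Group G] : Subgroup G := fitting G ⊔ layer G

/-- `N` is a minimal normal subgroup of `G`. -/
def IsMinimalNormal {G : Type*} [Group G] (N : Subgroup G) : Prop :=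
  N.Normal ∧ N ≠ ⊥ ∧ ∀ M : Subgroup G, M.Normal → M ≤ N → M ≠ ⊥ → M = N

/-- The socle of `G`: the subgroup generated by all minimal normal subgroups of `G`. -/
def socle (G : Type*) [Group G] : Subgroup G :=
  Subgroup.closure {x | ∃ N : Subgroup G, IsMinimalNormal N ∧ x ∈ N}

/-- `Soc(Z(G))`, viewed as a subgroup of `G`. -/
def centerSocle (G : Type*) [Group G] : Subgroup G :=
  (socle (Subgroup.center G)).map (Subgroup.center G).subtype

/-- The class `B` of groups all of whose quotients have trivial Frattini subgroup. -/
def classB (G : Type*) [Group G] : Prop :=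
  ∀ (N : Subgroup G) [N.Normal], frattini (G ⧸ N) = ⊥

/-!
Let `Z = Z(F(G))`, an abelian normal subgroup. A minimal supplement `K` of `Z` meets `Z` in a
normal subgroup that lies in every maximal subgroup, so `Φ(G) = 1` makes `K` a complement of `Z`.

A component `L` centralizes every nilpotent normal subgroup `N`. Along a subnormal series
`L = L₀ ⊴ L₁ ⊴ ⋯ ⊴ Lₙ = G` we get `[L, N ∩ Lᵢ₊₁] ≤ N ∩ Lᵢ`, which `L` centralizes by induction,
and the three subgroups lemma for the perfect group `L` then gives `[L, N ∩ Lᵢ₊₁] = 1`. In the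
base case `N ∩ L` is central in `L`, since otherwise `L = (N ∩ L) Z(L)` would lie in the
nilpotent group `N`.

Hence `F(G)` centralizes `E(G)`, so `F(G) ∩ E(G) ≤ Z` and `Z` centralizes `E(G)`. Writing
elements of `E(G)` as `zk` with `z ∈ Z`, `k ∈ K` shows `E(G) = [E(G), E(G)] ≤ K`, and therefore
`F(G) ∩ E(G) ≤ Z ∩ K = 1`.
-/

open scoped commutatorElement

section

variable {G : Type*} [Group G]

theorem commutatorElement_mul_left_of_commute {d k b : G} (hdk : Commute d k)
    (hdb : Commute d b) : ⁅d * k, b⁆ = ⁅k, b⁆ := by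
  have h : Commute d (k * b * k⁻¹) := (hdk.mul_right hdb).mul_right hdk.inv_right
  calc ⁅d * k, b⁆ = d * (k * b * k⁻¹) * d⁻¹ * b⁻¹ := by group
    _ = ⁅k, b⁆ := by rw [h.eq, mul_inv_cancel_right, commutatorElement_def]

theorem commutatorElement_mul_right_of_commute {d k b : G} (hdk : Commute d k)
    (hdb : Commute d b) : ⁅b, d * k⁆ = ⁅b, k⁆ := by
  rw [← commutatorElement_inv, commutatorElement_mul_left_of_commute hdk hdb,
    commutatorElement_inv]

namespace Subgroup

theorem commutator_le_of_sup_eq_top {A K H : Subgroup G} [A.Normal] (hA : A ≤ centralizer A)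
    (hAH : A ≤ centralizer H) (hAK : A ⊔ K = ⊤) : ⁅H, H⁆ ≤ K := by
  have hcomm : ∀ {d e k : G}, d ∈ A → e ∈ A → Commute d (e * k) → Commute d k :=
    fun {d e _} hd he h => by
      simpa using (Commute.symm (mem_centralizer_iff.mp (hA hd) e he)).inv_right.mul_right h
  rw [commutator_le]
  intro a ha b hb
  obtain ⟨d₁, hd₁, k₁, hk₁, rfl⟩ := mem_sup_of_normal_left.mp (hAK ▸ mem_top a)
  obtain ⟨d₂, hd₂, k₂, hk₂, rfl⟩ := mem_sup_of_normal_left.mp (hAK ▸ mem_top b)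
  have hd₁a : Commute d₁ _ := (mem_centralizer_iff.mp (hAH hd₁) _ ha).symm
  have hd₁b : Commute d₁ _ := (mem_centralizer_iff.mp (hAH hd₁) _ hb).symm
  have hd₂a : Commute d₂ _ := (mem_centralizer_iff.mp (hAH hd₂) _ ha).symm
  have hd₂b : Commute d₂ _ := (mem_centralizer_iff.mp (hAH hd₂) _ hb).symm
  rw [commutatorElement_mul_left_of_commute (hcomm hd₁ hd₁ hd₁a) hd₁b,
    commutatorElement_mul_right_of_commute (hcomm hd₂ hd₂ hd₂b) (hcomm hd₂ hd₁ hd₂a)]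
  exact commutator_le_self K (commutator_mem_commutator hk₁ hk₂)

theorem commutator_eq_bot_of_commutator_commutator_eq_bot {L X : Subgroup G}
    [Group.IsPerfect L] (h : ⁅⁅L, X⁆, L⁆ = ⊥) : ⁅L, X⁆ = ⊥ := by
  have := commutator_commutator_eq_bot_of_rotate h (by rwa [commutator_comm X L])
  rwa [commutator_eq_self] at this

theorem normal_inf_of_sup_eq_top {A K : Subgroup G} [A.Normal] (hA : A ≤ centralizer A)
    (hAK : A ⊔ K = ⊤) : (A ⊓ K).Normal := by
  rw [← normalizer_eq_top_iff, eq_top_iff, ← hAK]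
  refine sup_le ?_ ?_
  · exact (hA.trans (centralizer_le inf_le_left)).trans (centralizer_le_normalizer _)
  · exact (le_inf le_normalizer_of_normal K.le_normalizer).trans inf_normalizer_le_normalizer_inf

end Subgroup

theorem le_frattini_of_forall_sup_eq {X K : Subgroup G} [X.Normal] (hXK : X ≤ K)
    (hK : ∀ H ≤ K, X ⊔ H = K → H = K) : X ≤ frattini G := by
  rw [frattini, Order.radical]
  refine le_iInf₂ fun M (hM : IsCoatom M) => ?_
  by_contra hXM
  have hXM_top : X ⊔ M = ⊤ := hM.2 _ (right_lt_sup.mpr hXM)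
  have hdedekind : X ⊔ (K ⊓ M) = K := by
    apply SetLike.coe_injective
    rw [normal_mul, inf_comm, mul_inf_assoc _ _ _ hXK, ← normal_mul, hXM_top, coe_top,
      Set.univ_inter]
  have hKM : K ⊓ M = K := hK _ inf_le_left hdedekind
  exact hXM (hXK.trans (hKM ▸ inf_le_right))

theorem exists_isCompl_of_frattini_eq_bot [Finite G] (hG : frattini G = ⊥) {A : Subgroup G}
    [A.Normal] (hA : A ≤ centralizer A) : ∃ K : Subgroup G, IsCompl A K := by
  obtain ⟨K, -, hKmin⟩ :=
    exists_minimal_le_of_wellFoundedLT (fun K => A ⊔ K = ⊤) ⊤ (sup_top_eq A)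
  have hAK : A ⊔ K = ⊤ := hKmin.prop
  have := normal_inf_of_sup_eq_top hA hAK
  refine ⟨K, disjoint_iff.mpr ?_, codisjoint_iff.mpr hAK⟩
  rw [← le_bot_iff, ← hG]
  refine le_frattini_of_forall_sup_eq inf_le_right fun H hHK hH => le_antisymm hHK ?_
  refine hKmin.le_of_le ?_ hHK
  rw [eq_top_iff, ← hAK]
  calc A ⊔ K = A ⊔ (A ⊓ K ⊔ H) := by rw [hH]
    _ ≤ A ⊔ H := sup_le le_sup_left (sup_le (inf_le_left.trans le_sup_left) le_sup_right)

theorem IsQuasiSimple.isPerfect {Q : Type*} [Group Q] (hQ : IsQuasiSimple Q) :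
    Group.IsPerfect Q :=
  Group.isPerfect_def.mpr hQ.1

theorem IsQuasiSimple.nontrivial {Q : Type*} [Group Q] (hQ : IsQuasiSimple Q) : Nontrivial Q :=
  have := hQ.2
  (QuotientGroup.mk'_surjective (center Q)).nontrivial

theorem IsQuasiSimple.not_isNilpotent {Q : Type*} [Group Q] (hQ : IsQuasiSimple Q) :
    ¬ Group.IsNilpotent Q :=
  have := hQ.nontrivial
  have := hQ.isPerfect
  Group.IsPerfect.not_isNilpotent Q

theorem IsQuasiSimple.le_center_or_eq_top {Q : Type*} [Group Q] (hQ : IsQuasiSimple Q)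
    (M : Subgroup Q) [M.Normal] : M ≤ center Q ∨ M = ⊤ := by
  have := hQ.2
  have hsurj := QuotientGroup.mk'_surjective (center Q)
  rcases (‹M.Normal›.map _ hsurj).eq_bot_or_eq_top with hbot | htop
  · left
    rwa [Subgroup.map_eq_bot_iff, QuotientGroup.ker_mk'] at hbot
  · right
    have hsup : M ⊔ center Q = ⊤ := by
      rw [← QuotientGroup.ker_mk' (center Q), ← comap_map_eq, htop, comap_top]
    exact top_le_iff.mp
      (hQ.1 ▸ Normal.commutator_le_of_self_sup_commutative_eq_top hsup inferInstance)

theorem IsQuasiSimple.commutator_inf_eq_bot {Q N : Subgroup G} (hQ : IsQuasiSimple Q)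
    [N.Normal] (hN : Group.IsNilpotent N) : ⁅Q, N ⊓ Q⁆ = ⊥ := by
  rcases hQ.le_center_or_eq_top (N.subgroupOf Q) with hcent | htop
  · rw [commutator_eq_bot_iff_le_centralizer]
    rintro y hy x ⟨hxN, hxQ⟩
    exact congrArg Subtype.val (mem_center_iff.mp (hcent (x := ⟨x, hxQ⟩) hxN) ⟨y, hy⟩).symm
  · have hQN : Q ≤ N := subgroupOf_eq_top.mp htop
    exact (hQ.not_isNilpotent (Group.nilpotent_of_mulEquiv (subgroupOfEquivOfLe hQN))).elim

theorem IsComponent.commutator_eq_bot {L N : Subgroup G} (hL : IsComponent L) [N.Normal]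
    (hN : Group.IsNilpotent N) : ⁅L, N⁆ = ⊥ := by
  obtain ⟨⟨n, c, hc0, hcn, hc⟩, hQ⟩ := hL
  have := hQ.isPerfect
  have hLc : ∀ i, L ≤ c i := fun i => by
    induction i with
    | zero => exact hc0.ge
    | succ i ih => exact ih.trans (hc i).1
  have hstep : ∀ i, ⁅L, N ⊓ c (i + 1)⁆ ≤ N ⊓ c i := fun i =>
    le_inf ((commutator_mono le_rfl inf_le_left).trans (commutator_le_right _ _)) <|
      (commutator_mono (hLc i) inf_le_right).trans <|
        le_normalizer_iff_commutator_le_left.mp <|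
          (normal_subgroupOf_iff_le_normalizer (hc i).1).mp (hc i).2
  have key : ∀ i, ⁅L, N ⊓ c i⁆ = ⊥ := fun i => by
    induction i with
    | zero => rw [hc0]; exact hQ.commutator_inf_eq_bot hN
    | succ i ih =>
      refine commutator_eq_bot_of_commutator_commutator_eq_bot (eq_bot_iff.mpr ?_)
      rw [← ih]
      exact (commutator_mono (hstep i) le_rfl).trans (commutator_comm _ _).le
  simpa [hcn] using key n

theorem IsComponent.le_layer {L : Subgroup G} (hL : IsComponent L) : L ≤ layer G :=
  fun _ hx => subset_closure ⟨L, hL, hx⟩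

instance layer.isPerfect : Group.IsPerfect (layer G) := by
  refine isPerfect_iff.mpr (le_antisymm (commutator_le_self _) ?_)
  refine (closure_le _).mpr fun x ⟨L, hL, hx⟩ => ?_
  have := hL.2.isPerfect
  rw [← commutator_eq_self (H := L)] at hx
  exact commutator_mono hL.le_layer hL.le_layer hx

theorem layer_le_centralizer {N : Subgroup G} [N.Normal] (hN : Group.IsNilpotent N) :
    layer G ≤ centralizer N :=
  (closure_le _).mpr fun _ ⟨_, hL, hx⟩ =>
    commutator_eq_bot_iff_le_centralizer.mp (hL.commutator_eq_bot hN) hx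

theorem fitting_le_centralizer_layer : fitting G ≤ centralizer (layer G) := by
  refine (closure_le _).mpr fun x hx => ?_
  obtain ⟨a, ⟨N, hN, hnil, haN⟩, hax⟩ := Group.mem_conjugatesOfSet_iff.mp hx
  obtain ⟨c, rfl⟩ := isConj_iff.mp hax
  exact le_centralizer_iff.mp (layer_le_centralizer hnil) (hN.conj_mem a haN c)

end

/-- If `Φ(G) = 1` then `F(G) ∩ E(G) = 1`, the two subgroups commute elementwise,
and `F*(G)` is their (internal direct) product `F(G) × E(G)`. -/
theorem stmt_8 (G : Type*) [Group G] [Finite G] (hG : frattini G = ⊥) :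
    fitting G ⊓ layer G = ⊥ ∧ (∀ x ∈ fitting G, ∀ y ∈ layer G, Commute x y) ∧
      genFitting G = fitting G ⊔ layer G := by
  have hFE : fitting G ≤ centralizer (layer G : Set G) := fitting_le_centralizer_layer
  refine ⟨?_, fun x hx y hy => (mem_centralizer_iff.mp (hFE hx) y hy).symm, rfl⟩
  have : (fitting G).Normal := normalClosure_normal
  set Z := fitting G ⊓ centralizer (fitting G : Set G)
  have hZ : Z ≤ centralizer (Z : Set G) := inf_le_right.trans (centralizer_le inf_le_left)
  obtain ⟨K, hZK⟩ := exists_isCompl_of_frattini_eq_bot hG hZ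
  have hEK : layer G ≤ K := commutator_eq_self (H := layer G) ▸
    commutator_le_of_sup_eq_top hZ (inf_le_left.trans hFE) hZK.sup_eq_top
  have hFEZ : fitting G ⊓ layer G ≤ Z := inf_le_inf_left _ (le_centralizer_iff.mp hFE)
  exact eq_bot_iff.mpr (hZK.inf_eq_bot ▸ le_inf hFEZ (inf_le_right.trans hEK))
end

section
/- Define S_0 = 1 and S_{i+1}/S_i = Soc(Z(G/S_i)) for a finite group G. Then for every j ≥ 0 and every normal subgroup H of G with S_j ≤ H ≤ S_{j+1}, one has Φ(G/H) = Φ(G)H/H. -/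
open Subgroup

/-!
Say that a homomorphism `φ : G →* G'` preserves Frattini subgroups if `Φ(G') = φ(Φ(G))`.
Surjections whose kernel lies in `Φ(G)` do, and the property is stable under composition.
If `P` is a central subgroup of prime order not contained in `Φ(G)`, then some maximal
subgroup `M` is a complement of `P`; it is normal, so `Φ(M) ≤ Φ(G)`, and `M ≅ G/P`, whence
`Φ(G/P) ≤ Φ(G)P/P`. Peeling off central subgroups of prime order one at a time shows that
`G → G/N` preserves Frattini subgroups for every central `N`. Since `H/S_j` is central in
`G/S_j`, induction on `j` gives the theorem.
-/

open Function
open scoped Pointwise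
open QuotientGroup (mk' mk'_surjective ker_mk')

section General

variable {G G' G'' : Type*} [Group G] [Group G'] [Group G'']

theorem Subgroup.normal_of_le_center {N : Subgroup G} (h : N ≤ center G) : N.Normal :=
  ⟨fun n hn g => by rwa [mem_center_iff.mp (h hn) g, mul_inv_cancel_right]⟩

theorem Subgroup.map_center_le_center {φ : G →* G'} (hφ : Surjective φ) :
    (center G).map φ ≤ center G' := by
  rintro _ ⟨z, hz, rfl⟩
  refine mem_center_iff.mpr fun g => ?_
  obtain ⟨g, rfl⟩ := hφ g
  rw [← map_mul, ← map_mul, mem_center_iff.mp hz g]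

theorem centerSocle_le_center : centerSocle G ≤ center G :=
  map_subtype_le _

theorem Subgroup.sup_inf_assoc_of_le_of_normal {F N : Subgroup G} [F.Normal] (K : Subgroup G)
    (h : F ≤ N) : (F ⊔ K) ⊓ N = F ⊔ K ⊓ N := by
  refine le_antisymm ?_ (le_inf (sup_le_sup_left inf_le_left F) (sup_le h inf_le_right))
  rintro x ⟨hxFK, hxN⟩
  obtain ⟨f, hf, k, hk, rfl⟩ : x ∈ (F : Set G) * (K : Set G) := normal_mul F K ▸ hxFK
  rw [← SetLike.mem_coe, normal_mul]
  exact ⟨f, hf, k, ⟨hk, (mul_mem_cancel_left (h hf)).mp hxN⟩, rfl⟩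

theorem Subgroup.isCoatom_map_of_ker_le {φ : G →* G'} (hφ : Surjective φ) {M : Subgroup G}
    (hM : IsCoatom M) (hker : φ.ker ≤ M) : IsCoatom (M.map φ) := by
  have hcomap : (M.map φ).comap φ = M := comap_map_eq_self hker
  refine ⟨fun htop => hM.1 ?_, fun K hK => ?_⟩
  · rw [← hcomap, htop, comap_top]
  · have hMK : M < K.comap φ := by rwa [← hcomap, comap_lt_comap_of_surjective hφ]
    rw [← map_comap_eq_self_of_surjective hφ K, hM.2 _ hMK, map_top_of_surjective _ hφ]

theorem Subgroup.isCompl_of_isCoatom_of_prime_card {M P : Subgroup G} (hM : IsCoatom M)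
    (hPM : ¬ P ≤ M) (hP : (Nat.card P).Prime) : IsCompl M P := by
  have : Finite P := Nat.finite_of_card_ne_zero hP.ne_zero
  refine ⟨disjoint_iff.mpr ?_, codisjoint_iff.mpr (hM.2 _ (left_lt_sup.mpr hPM))⟩
  rcases hP.eq_one_or_self_of_dvd _ (card_dvd_of_le (inf_le_right : M ⊓ P ≤ P)) with h | h
  · exact card_eq_one.mp h
  · exact absurd (eq_of_le_of_card_ge inf_le_right h.ge ▸ inf_le_left) hPM

theorem map_frattini_le_frattini {φ : G →* G'} (hφ : Surjective φ) :
    (frattini G).map φ ≤ frattini G' :=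
  map_le_iff_le_comap.mpr (frattini_le_comap_frattini_of_surjective hφ)

def PreservesFrattini (φ : G →* G') : Prop :=
  frattini G' = (frattini G).map φ

theorem PreservesFrattini.comp {φ : G →* G'} {ψ : G' →* G''} (hφ : PreservesFrattini φ)
    (hψ : PreservesFrattini ψ) : PreservesFrattini (ψ.comp φ) := by
  rw [PreservesFrattini, hψ, hφ, map_map]

theorem preservesFrattini_of_ker_le_frattini {φ : G →* G'} (hφ : Surjective φ)
    (hker : φ.ker ≤ frattini G) : PreservesFrattini φ := by
  refine le_antisymm ?_ (map_frattini_le_frattini hφ)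
  rw [← map_comap_eq_self_of_surjective hφ (frattini G')]
  refine map_mono (le_iInf₂ fun M (hM : IsCoatom M) => ?_)
  have hkerM : φ.ker ≤ M := hker.trans (frattini_le_coatom hM)
  exact (comap_mono (frattini_le_coatom (isCoatom_map_of_ker_le hφ hM hkerM))).trans_eq
    (comap_map_eq_self hkerM)

theorem preservesFrattini_mk'_of_le_frattini {N : Subgroup G} [N.Normal] (h : N ≤ frattini G) :
    PreservesFrattini (mk' N) :=
  preservesFrattini_of_ker_le_frattini (mk'_surjective N) ((ker_mk' N).trans_le h)

theorem MulEquiv.preservesFrattini (e : G ≃* G') : PreservesFrattini e.toMonoidHom :=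
  preservesFrattini_of_ker_le_frattini e.surjective
    (by rw [(MonoidHom.ker_eq_bot_iff _).mpr e.injective]; exact bot_le)

theorem PreservesFrattini.mk'_of_ker_eq {φ : G →* G'} (hφ : Surjective φ)
    (h : PreservesFrattini φ) {N : Subgroup G} [N.Normal] (hN : φ.ker = N) :
    PreservesFrattini (mk' N) := by
  subst hN
  set e := QuotientGroup.quotientKerEquivOfSurjective φ hφ
  have hmk : e.symm.toMonoidHom.comp φ = mk' φ.ker := by
    ext x
    exact e.symm_apply_eq.mpr rfl
  exact hmk ▸ h.comp e.symm.preservesFrattini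

theorem PreservesFrattini.mk'_of_mk'_map {φ : G →* G'} (hφ : Surjective φ)
    (h : PreservesFrattini φ) {N : Subgroup G} [N.Normal] [(N.map φ).Normal] (hker : φ.ker ≤ N)
    (hN : PreservesFrattini (mk' (N.map φ))) : PreservesFrattini (mk' N) := by
  refine (h.comp hN).mk'_of_ker_eq (φ := (mk' (N.map φ)).comp φ)
    ((mk'_surjective _).comp hφ) ?_
  rw [← MonoidHom.comap_ker, ker_mk', comap_map_eq, sup_eq_left.mpr hker]

end General

section Finite

variable {G : Type*} [Group G] [Finite G]

theorem Subgroup.exists_le_prime_card {N : Subgroup G} (hN : N ≠ ⊥) :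
    ∃ P ≤ N, (Nat.card P).Prime := by
  have hp : (Nat.card N).minFac.Prime := Nat.minFac_prime ((one_lt_card_iff_ne_bot N).mpr hN).ne'
  have := Fact.mk hp
  obtain ⟨x, hx⟩ := exists_prime_orderOf_dvd_card' (G := N) _ (Nat.minFac_dvd _)
  refine ⟨zpowers (x : G), zpowers_le.mpr x.2, ?_⟩
  rwa [Nat.card_zpowers, orderOf_coe, hx]

theorem map_subtype_frattini_le_frattini (N : Subgroup G) [N.Normal] :
    (frattini N).map N.subtype ≤ frattini G := by
  -- `F` is normal in `G`, being characteristic in the normal subgroup `N`.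
  set F := (frattini N).map N.subtype
  refine le_iInf₂ fun K (hK : IsCoatom K) => ?_
  by_contra hFK
  have hFN : F ≤ N := map_subtype_le _
  have hFK_top : F ⊔ K = ⊤ := by rw [sup_comm]; exact hK.2 _ (left_lt_sup.mpr hFK)
  have hgen : K.subgroupOf N ⊔ frattini N = ⊤ := by
    apply map_injective N.subtype_injective
    rw [Subgroup.map_sup, subgroupOf_map_subtype, ← MonoidHom.range_eq_map, range_subtype,
      sup_comm, ← sup_inf_assoc_of_le_of_normal K hFN, hFK_top, top_inf_eq]
  exact hFK (hFN.trans (subgroupOf_eq_top.mp (frattini_nongenerating hgen)))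

theorem preservesFrattini_mk'_of_isCompl {M P : Subgroup G} [P.Normal] (hP : P ≤ center G)
    (hMP : IsCompl M P) : PreservesFrattini (mk' P) := by
  have : M.Normal := normalizer_eq_top_iff.mp <| top_unique <| hMP.sup_eq_top ▸
    sup_le le_normalizer (hP.trans (center_le_normalizer _))
  set f := (mk' P).comp M.subtype
  have hf_inj : Injective f := by
    refine (injective_iff_map_eq_one f).mpr fun m hm => ?_
    have hmP : (m : G) ∈ M ⊓ P := ⟨m.2, (QuotientGroup.eq_one_iff _).mp hm⟩
    rw [hMP.inf_eq_bot, mem_bot] at hmP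
    exact Subtype.ext hmP
  have hf_surj : Surjective f := by
    rintro ⟨g⟩
    have hg : g ∈ ((M ⊔ P : Subgroup G) : Set G) := by rw [hMP.sup_eq_top]; trivial
    rw [mul_normal] at hg
    obtain ⟨m, hm, p, hp, rfl⟩ := hg
    exact ⟨⟨m, hm⟩, (QuotientGroup.eq.mpr (by simpa using hp)).symm⟩
  have hf : PreservesFrattini f := preservesFrattini_of_ker_le_frattini hf_surj
    (by rw [(MonoidHom.ker_eq_bot_iff f).mpr hf_inj]; exact bot_le)
  refine le_antisymm ?_ (map_frattini_le_frattini (mk'_surjective P))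
  rw [hf, ← map_map]
  exact map_mono (map_subtype_frattini_le_frattini M)

theorem preservesFrattini_mk'_of_le_center (N : Subgroup G) [N.Normal] (hN : N ≤ center G) :
    PreservesFrattini (mk' N) := by
  induction h : Nat.card G using Nat.strong_induction_on generalizing G with
  | _ n ih =>
  rcases eq_or_ne N ⊥ with rfl | hN_bot
  · exact preservesFrattini_mk'_of_le_frattini bot_le
  obtain ⟨P, hPN, hP⟩ := exists_le_prime_card hN_bot
  have hPc : P ≤ center G := hPN.trans hN
  have := normal_of_le_center hPc
  have hmkP : PreservesFrattini (mk' P) := by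
    by_cases hPΦ : P ≤ frattini G
    · exact preservesFrattini_mk'_of_le_frattini hPΦ
    · obtain ⟨M, hM, hPM⟩ : ∃ M, IsCoatom M ∧ ¬ P ≤ M := by
        simpa [frattini, Order.radical, le_iInf₂_iff] using hPΦ
      exact preservesFrattini_mk'_of_isCompl hPc (isCompl_of_isCoatom_of_prime_card hM hPM hP)
  have hNc : N.map (mk' P) ≤ center (G ⧸ P) :=
    (map_mono hN).trans (map_center_le_center (mk'_surjective P))
  have := normal_of_le_center hNc
  have hcard : Nat.card (G ⧸ P) < n := by
    have := card_eq_card_quotient_mul_card_subgroup P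
    have := hP.two_le
    have : 0 < Nat.card (G ⧸ P) := Nat.card_pos
    nlinarith
  exact hmkP.mk'_of_mk'_map (mk'_surjective P) (by rwa [ker_mk']) (ih _ hcard _ hNc rfl)

end Finite

/-- For the ascending series `S 0 = 1`, `S (i+1) / S i = Soc(Z(G / S i))`, every
normal subgroup `H` of `G` with `S j ≤ H ≤ S (j+1)` satisfies `Φ(G/H) = Φ(G)H/H`. -/
theorem stmt_13 (G : Type*) [Group G] [Finite G] (S : ℕ → Subgroup G)
    (hnorm : ∀ i, (S i).Normal) (h0 : S 0 = ⊥)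
    (hstep : ∀ i, S i ≤ S (i + 1) ∧
      (letI := hnorm i;
        (S (i + 1)).map (QuotientGroup.mk' (S i)) = centerSocle (G ⧸ S i)))
    (j : ℕ) (H : Subgroup G) [H.Normal] (h1 : S j ≤ H) (h2 : H ≤ S (j + 1)) :
    frattini (G ⧸ H) = (frattini G).map (QuotientGroup.mk' H) := by
  have step : ∀ i (K : Subgroup G) [K.Normal], S i ≤ K → K ≤ S (i + 1) →
      (letI := hnorm i; PreservesFrattini (mk' (S i))) → PreservesFrattini (mk' K) := by
    intro i K _ hSK hKS hSi
    have := hnorm i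
    have hKc : K.map (mk' (S i)) ≤ center (G ⧸ S i) :=
      ((map_mono hKS).trans_eq (hstep i).2).trans centerSocle_le_center
    have := normal_of_le_center hKc
    exact hSi.mk'_of_mk'_map (mk'_surjective _) (by rwa [ker_mk'])
      (preservesFrattini_mk'_of_le_center _ hKc)
  have hS : ∀ i, (letI := hnorm i; PreservesFrattini (mk' (S i))) := by
    intro i
    induction i with
    | zero => exact @preservesFrattini_mk'_of_le_frattini _ _ _ (hnorm 0) (h0 ▸ bot_le)
    | succ i ih => exact @step i _ (hnorm _) (hstep i).1 le_rfl ih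
  exact step j H h1 h2 (hS j)
end

section
/- A finite group G satisfies Φ(G/N) = Φ(G)N/N for all normal subgroups N of G if and only if Φ((G/F(G))/M) = 1 for every normal subgroup M of G/F(G), where F(G) is the Fitting subgroup. -/
open Subgroup

instance fitting_normal (G : Type*) [Group G] : (fitting G).Normal :=
  Subgroup.normalClosure_normal

/-!
Since `G/(NΦ(G)) ≅ (G/N)/(Φ(G)N/N)`, the left-hand side says exactly that every quotient of
`G/Φ(G)` has trivial Frattini subgroup, and as `Φ(G) ≤ F(G)` only the converse needs work.
Passing to `G/Φ(G)` we may assume `Φ(G) = 1` and induct on `|G|`, so it suffices that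
`Φ(G/A) = 1` for a minimal normal subgroup `A`. If `T/A = Φ(G/A)` were nontrivial, then
`T ≤ AF(G)` (as `Φ(G/AF(G)) = 1`) and `T` contains a minimal normal `B ≤ F(G)` with
`A ∩ B = 1`; minimal normal subgroups centralize `F(G)`, so `B` is abelian. When `Φ(G) = 1`
abelian normal subgroups are complemented, and `B` has a complement `M ⊇ A`: take `A` times a
complement of `AB` if `A` is abelian; otherwise `A` is perfect and centralizes `B`, while
`C_G(B)/(C_G(B) ∩ M)` is abelian. A maximal subgroup containing `M` contains `A`, hence
`T ⊇ B`, hence `BM = G`: a contradiction.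
-/

open QuotientGroup
open scoped commutatorElement

section Frattini

variable {G H : Type*} [Group G] [Group H]

theorem Subgroup.isCoatom_map_of_ker_le_s18 {f : G →* H} (hf : Function.Surjective f)
    {M : Subgroup G} (hker : f.ker ≤ M) (hM : IsCoatom M) : IsCoatom (M.map f) := by
  have hcomap : (M.map f).comap f = M := comap_map_eq_self hker
  refine ⟨fun htop => hM.1 ?_, fun K hK => ?_⟩
  · rw [← hcomap, htop, comap_top]
  · have : M < K.comap f := by
      rw [← hcomap]; exact (comap_lt_comap_of_surjective hf).2 hK
    rw [← map_comap_eq_self_of_surjective hf K, hM.2 _ this, ← MonoidHom.range_eq_map,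
      MonoidHom.range_eq_top.2 hf]

theorem frattini_eq_bot_iff_of_mulEquiv (e : G ≃* H) : frattini G = ⊥ ↔ frattini H = ⊥ := by
  have : (frattini G).map (e : G →* H) = frattini H := e.mapSubgroup.map_radical
  rw [← this, map_eq_bot_iff_of_injective _ e.injective]

theorem map_frattini_le_frattini_quotient (N : Subgroup G) [N.Normal] :
    (frattini G).map (mk' N) ≤ frattini (G ⧸ N) :=
  map_le_iff_le_comap.2 (frattini_le_comap_frattini_of_surjective (mk'_surjective N))

theorem frattini_le_of_frattini_quotient_eq_bot {N : Subgroup G} [N.Normal]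
    (h : frattini (G ⧸ N) = ⊥) : frattini G ≤ N := by
  simpa [h] using frattini_le_comap_frattini_of_surjective (mk'_surjective N)

theorem comap_frattini_quotient_le {N M : Subgroup G} [N.Normal] (hM : IsCoatom M)
    (hNM : N ≤ M) : (frattini (G ⧸ N)).comap (mk' N) ≤ M := by
  have hco := isCoatom_map_of_ker_le_s18 (mk'_surjective N) (by rwa [ker_mk']) hM
  simpa [sup_of_le_right hNM] using comap_mono (f := mk' N) (frattini_le_coatom hco)

theorem frattini_quotient_frattini : frattini (G ⧸ frattini G) = ⊥ := by
  have : (frattini (G ⧸ frattini G)).comap (mk' (frattini G)) ≤ frattini G :=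
    le_iInf₂ fun M hM => comap_frattini_quotient_le hM (frattini_le_coatom hM)
  rw [← map_comap_eq_self_of_surjective (mk'_surjective _) (frattini _), Subgroup.map_eq_bot_iff,
    ker_mk']
  exact this

end Frattini

section ClassB

variable {G H : Type*} [Group G] [Group H]

theorem frattini_quotient_quotient_eq_bot_iff (K : Subgroup G) [K.Normal]
    (M : Subgroup (G ⧸ K)) [M.Normal] :
    frattini ((G ⧸ K) ⧸ M) = ⊥ ↔ frattini (G ⧸ M.comap (mk' K)) = ⊥ :=
  frattini_eq_bot_iff_of_mulEquiv <|
    (quotientMulEquivOfEq (map_comap_eq_self_of_surjective (mk'_surjective K) M)).symm.trans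
      (quotientQuotientEquivQuotient K _ (le_comap_mk' K M))

theorem classB_quotient_iff (K : Subgroup G) [K.Normal] :
    classB (G ⧸ K) ↔ ∀ (N : Subgroup G) [N.Normal], K ≤ N → frattini (G ⧸ N) = ⊥ := by
  refine ⟨fun h N _ hKN => ?_, fun h M _ => ?_⟩
  · have := (frattini_quotient_quotient_eq_bot_iff K (N.map (mk' K))).1 (h _)
    rwa [frattini_eq_bot_iff_of_mulEquiv
      (quotientMulEquivOfEq (by rw [comap_map_mk', sup_of_le_right hKN]))] at this
  · exact (frattini_quotient_quotient_eq_bot_iff K M).2 (h _ (le_comap_mk' K M))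

theorem classB_quotient_of_le {K L : Subgroup G} [K.Normal] [L.Normal] (hKL : K ≤ L)
    (h : classB (G ⧸ K)) : classB (G ⧸ L) := by
  rw [classB_quotient_iff] at h ⊢
  exact fun N _ hLN => h N (hKL.trans hLN)

theorem le_fitting {X : Subgroup G} (hX : X.Normal) (hnil : Group.IsNilpotent X) :
    X ≤ fitting G :=
  fun _ hx => subset_normalClosure ⟨X, hX, hnil, hx⟩

theorem frattini_le_fitting [Finite G] : frattini G ≤ fitting G :=
  le_fitting inferInstance frattini_nilpotent

theorem map_fitting_le {f : G →* H} (hf : Function.Surjective f) :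
    (fitting G).map f ≤ fitting H := by
  rw [fitting, map_normalClosure _ _ hf]
  refine normalClosure_le_normal ?_
  rintro _ ⟨_, ⟨X, hX, hnil, hx⟩, rfl⟩
  exact subset_normalClosure ⟨X.map f, hX.map f hf,
    Group.nilpotent_of_surjective _ (f.subgroupMap_surjective X), mem_map_of_mem f hx⟩

theorem classB_quotient_fitting_quotient (N : Subgroup G) [N.Normal]
    (h : classB (G ⧸ fitting G)) : classB ((G ⧸ N) ⧸ fitting (G ⧸ N)) := by
  rw [classB_quotient_iff] at h ⊢
  intro M _ hM
  rw [frattini_quotient_quotient_eq_bot_iff]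
  exact h _ (map_le_iff_le_comap.1 ((map_fitting_le (mk'_surjective N)).trans hM))

end ClassB

section MinimalNormal

variable {G : Type*} [Group G]

theorem exists_isMinimalNormal_le [Finite G] {N : Subgroup G} (hN : N.Normal) (hN0 : N ≠ ⊥) :
    ∃ A, IsMinimalNormal A ∧ A ≤ N := by
  obtain ⟨A, ⟨hA, hA0, hAN⟩, hmin⟩ :
      ∃ A, Minimal (fun A : Subgroup G => A.Normal ∧ A ≠ ⊥ ∧ A ≤ N) A :=
    WellFoundedLT.exists_minimal inferInstance _ ⟨N, hN, hN0, le_rfl⟩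
  exact ⟨A, ⟨hA, hA0, fun M hM hMA hM0 => le_antisymm hMA (hmin ⟨hM, hM0, hMA.trans hAN⟩ hMA)⟩,
    hAN⟩

theorem IsMinimalNormal.le_of_inf_ne_bot {A N : Subgroup G} (hA : IsMinimalNormal A)
    (hN : N.Normal) (h : A ⊓ N ≠ ⊥) : A ≤ N :=
  have := hA.1
  inf_eq_left.1 (hA.2.2 _ inferInstance inf_le_left h)

theorem IsMinimalNormal.commutator_eq_bot_of_isNilpotent {A X : Subgroup G}
    (hA : IsMinimalNormal A) (hX : X.Normal) (hnil : Group.IsNilpotent X) : ⁅A, X⁆ = ⊥ := by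
  have := hA.1
  by_contra hAX
  have hAX : ⁅A, X⁆ = A := hA.2.2 _ inferInstance (commutator_le_left A X) hAX
  have hle : A ≤ X := hAX ▸ commutator_le_right A X
  obtain ⟨n, hn⟩ := (isNilpotent_iff_lowerCentralSeries X).1 hnil
  have hAn : ∀ n, A ≤ X.lowerCentralSeries n := by
    intro n
    induction n with
    | zero => exact hle
    | succ n ih => exact hAX ▸ commutator_mono ih le_rfl
  exact hA.2.1 (le_bot_iff.1 (hn ▸ hAn n))

theorem IsMinimalNormal.le_centralizer_fitting {A : Subgroup G} (hA : IsMinimalNormal A) :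
    A ≤ centralizer (fitting G) := by
  have := hA.1
  rw [le_centralizer_iff, fitting]
  refine normalClosure_le_normal ?_
  rintro x ⟨X, hX, hnil, hx⟩
  exact le_centralizer_iff.1
    (commutator_eq_bot_iff_le_centralizer.1 (hA.commutator_eq_bot_of_isNilpotent hX hnil)) hx

end MinimalNormal

section Complements

variable {G : Type*} [Group G]

theorem Subgroup.sup_inf_assoc_of_le_of_normal_s18 {A T : Subgroup G} [A.Normal] (M : Subgroup G)
    (h : A ≤ T) : (A ⊔ M) ⊓ T = A ⊔ M ⊓ T :=
  SetLike.coe_injective <| by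
    rw [coe_inf, normal_mul, normal_mul, mul_inf_assoc A M T h]

theorem Subgroup.normal_inf_of_sup_eq_top_s18 {N Q M : Subgroup G} (hN : N.Normal) [Q.Normal]
    (hQM : Q ⊔ M = ⊤) (hQN : Q ≤ centralizer N) : (N ⊓ M).Normal := by
  refine ⟨fun x hx g => ?_⟩
  have hg : g ∈ ((Q ⊔ M : Subgroup G) : Set G) := hQM ▸ mem_top g
  rw [normal_mul] at hg
  obtain ⟨q, hq, m, hm, rfl⟩ := hg
  have hy : m * x * m⁻¹ ∈ N ⊓ M :=
    ⟨hN.conj_mem x hx.1 m, M.mul_mem (M.mul_mem hm hx.2) (M.inv_mem hm)⟩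
  have hqy : m * x * m⁻¹ * q = q * (m * x * m⁻¹) := mem_centralizer_iff.1 (hQN hq) _ hy.1
  show q * m * x * (q * m)⁻¹ ∈ N ⊓ M
  rwa [show q * m * x * (q * m)⁻¹ = q * (m * x * m⁻¹) * q⁻¹ by group, ← hqy,
    mul_inv_cancel_right]

theorem exists_isCoatom_not_le (hΦ : frattini G = ⊥) {X : Subgroup G} (hX : X ≠ ⊥) :
    ∃ M, IsCoatom M ∧ ¬ X ≤ M := by
  by_contra! h
  exact hX (le_bot_iff.1 (hΦ ▸ le_iInf₂ h))

theorem exists_complement_of_frattini_eq_bot [Finite G] (hΦ : frattini G = ⊥)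
    {V : Subgroup G} [V.Normal] (hV : V ≤ centralizer V) : ∃ M, V ⊔ M = ⊤ ∧ V ⊓ M = ⊥ := by
  obtain ⟨M, hVM, hmin⟩ : ∃ M, Minimal (fun M => V ⊔ M = ⊤) M :=
    WellFoundedLT.exists_minimal inferInstance _ ⟨⊤, sup_top_eq V⟩
  refine ⟨M, hVM, ?_⟩
  have := normal_inf_of_sup_eq_top_s18 inferInstance hVM hV
  by_contra hD
  obtain ⟨U, hU, hDU⟩ := exists_isCoatom_not_le hΦ hD
  have hM : M = V ⊓ M ⊔ U ⊓ M := by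
    rw [← sup_inf_assoc_of_le_of_normal_s18 U inf_le_right, hU.2 _ (right_lt_sup.2 hDU), top_inf_eq]
  have hVU : V ⊔ U ⊓ M = ⊤ := by
    rwa [hM, ← sup_assoc, sup_inf_self] at hVM
  exact hDU (inf_le_right.trans ((hmin hVU inf_le_right).trans inf_le_left))

theorem commutator_centralizer_le {B M : Subgroup G} [B.Normal] (hB : B ≤ centralizer B)
    (hBM : B ⊔ M = ⊤) : ⁅centralizer (B : Set G), centralizer (B : Set G)⁆ ≤ M := by
  have hcomm : ∀ b ∈ B, ∀ z ∈ centralizer (B : Set G), b * z = z * b :=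
    fun b hb z hz => mem_centralizer_iff.1 hz b hb
  have hdecomp : ∀ x ∈ centralizer (B : Set G), ∃ b ∈ B, ∃ m ∈ M ⊓ centralizer B, x = b * m := by
    intro x hx
    have hx' : x ∈ ((B ⊔ M : Subgroup G) : Set G) := hBM ▸ mem_top x
    rw [normal_mul] at hx'
    obtain ⟨b, hb, m, hm, rfl⟩ := hx'
    refine ⟨b, hb, m, ⟨hm, ?_⟩, rfl⟩
    simpa using mul_mem (inv_mem (hB hb)) hx
  have hmem : ∀ {K : Subgroup G} {a c : G}, a ∈ K → c ∈ K → ⁅a, c⁆ ∈ K := fun ha hc => by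
    rw [commutatorElement_def]; exact mul_mem (mul_mem (mul_mem ha hc) (inv_mem ha)) (inv_mem hc)
  rw [commutator_le]
  intro x hx y hy
  obtain ⟨b, hb, m, ⟨hmM, hmC⟩, rfl⟩ := hdecomp x hx
  obtain ⟨b', hb', m', ⟨hm'M, hm'C⟩, rfl⟩ := hdecomp y hy
  have hw : m * (b' * m') * m⁻¹ ∈ centralizer B :=
    mul_mem (mul_mem hmC (mul_mem (hB hb') hm'C)) (inv_mem hmC)
  suffices ⁅b * m, b' * m'⁆ = ⁅m, m'⁆ from this ▸ hmem hmM hm'M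
  calc ⁅b * m, b' * m'⁆ = b * (m * (b' * m') * m⁻¹) * b⁻¹ * (m'⁻¹ * b'⁻¹) := by group
    _ = b' * ⁅m, m'⁆ * b'⁻¹ := by
        rw [hcomm b hb _ hw, mul_inv_cancel_right, ← mul_assoc m, ← hcomm b' hb' m hmC]; group
    _ = ⁅m, m'⁆ := by
        rw [hcomm b' hb' _ (hmem hmC hm'C), mul_inv_cancel_right]

end Complements

section FrattiniFree

variable {G : Type*} [Group G] [Finite G]

theorem exists_complement_ge_of_sup_le_centralizer (hΦ : frattini G = ⊥) {A B : Subgroup G}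
    [A.Normal] [B.Normal] (hAB : A ⊓ B = ⊥)
    (hcomm : A ⊔ B ≤ centralizer ((A ⊔ B : Subgroup G) : Set G)) :
    ∃ M, A ≤ M ∧ B ⊔ M = ⊤ ∧ B ⊓ M = ⊥ := by
  obtain ⟨W, hVW, hVW'⟩ := exists_complement_of_frattini_eq_bot hΦ hcomm
  refine ⟨A ⊔ W, le_sup_left, by rwa [← sup_assoc, sup_comm B], ?_⟩
  have hA : (A ⊔ W) ⊓ (A ⊔ B) = A := by
    rw [sup_inf_assoc_of_le_of_normal_s18 W le_sup_left, inf_comm, hVW', sup_bot_eq]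
  have hBA : B ⊓ (A ⊔ W) ≤ A := (le_inf inf_le_right (inf_le_left.trans le_sup_right)).trans hA.le
  exact le_bot_iff.1 (hAB ▸ le_inf hBA inf_le_left)

theorem exists_complement_ge_of_commutator_eq_self (hΦ : frattini G = ⊥) {A B : Subgroup G}
    [B.Normal] (hB : B ≤ centralizer (B : Set G)) (hAB : A ≤ centralizer (B : Set G))
    (hA : ⁅A, A⁆ = A) : ∃ M, A ≤ M ∧ B ⊔ M = ⊤ ∧ B ⊓ M = ⊥ := by
  obtain ⟨M, hBM, hBM'⟩ := exists_complement_of_frattini_eq_bot hΦ hB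
  exact ⟨M, hA ▸ (commutator_mono hAB hAB).trans (commutator_centralizer_le hB hBM), hBM, hBM'⟩

theorem eq_bot_of_le_comap_frattini_quotient {A B M : Subgroup G} [A.Normal]
    (hB : B ≤ (frattini (G ⧸ A)).comap (mk' A)) (hAM : A ≤ M) (hBM : B ⊔ M = ⊤)
    (hBM' : B ⊓ M = ⊥) : B = ⊥ := by
  by_contra hB0
  obtain ⟨U, hU, hMU⟩ := (eq_top_or_exists_le_coatom M).resolve_left
    fun h => hB0 (by rwa [h, inf_top_eq] at hBM')
  exact hU.1 (top_le_iff.1 (hBM ▸ sup_le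
    (hB.trans (comap_frattini_quotient_le hU (hAM.trans hMU))) hMU))

theorem exists_isMinimalNormal_le_inf {A T X : Subgroup G} [A.Normal] (hAT : A ≤ T)
    (hTA : ¬ T ≤ A) (hTX : T ≤ A ⊔ X) (hN : (T ⊓ X).Normal) :
    ∃ B, IsMinimalNormal B ∧ B ≤ T ⊓ X := by
  refine exists_isMinimalNormal_le hN fun h => hTA ?_
  rw [← inf_eq_right.2 hTX, sup_inf_assoc_of_le_of_normal_s18 X hAT, inf_comm, h, sup_bot_eq]

theorem frattini_quotient_eq_bot_of_isMinimalNormal (hΦ : frattini G = ⊥) {A : Subgroup G}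
    [A.Normal] (hA : IsMinimalNormal A) (hAF : frattini (G ⧸ (A ⊔ fitting G)) = ⊥) :
    frattini (G ⧸ A) = ⊥ := by
  set F := fitting G
  set T := (frattini (G ⧸ A)).comap (mk' A)
  have hAT : A ≤ T := le_comap_mk' A _
  suffices hTA : T ≤ A by
    rw [← map_comap_eq_self_of_surjective (mk'_surjective A) (frattini _), Subgroup.map_eq_bot_iff,
      ker_mk']
    exact hTA
  by_contra hTA
  have hTAF : T ≤ A ⊔ F := by
    have h := frattini_le_of_frattini_quotient_eq_bot
      ((frattini_eq_bot_iff_of_mulEquiv (quotientQuotientEquivQuotient A _ le_sup_left)).2 hAF)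
    simpa using comap_mono (f := mk' A) h
  have habelian : ∀ {B : Subgroup G}, IsMinimalNormal B → B ≤ F → B ≤ centralizer (B : Set G) :=
    fun hB hBF => hB.le_centralizer_fitting.trans (centralizer_le hBF)
  by_cases hAF' : A ≤ F
  · have hTF : T ≤ F := hTAF.trans (sup_le hAF' le_rfl)
    obtain ⟨M₀, hAM₀, hAM₀'⟩ := exists_complement_of_frattini_eq_bot hΦ (habelian hA hAF')
    obtain ⟨B, hB, hBT⟩ := exists_isMinimalNormal_le_inf hAT hTA (hAM₀ ▸ le_top)
      (normal_inf_of_sup_eq_top_s18 inferInstance hAM₀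
        (hA.le_centralizer_fitting.trans (centralizer_le hTF)))
    have := hB.1
    have hAB : A ⊓ B = ⊥ := le_bot_iff.1 (hAM₀' ▸ inf_le_inf_left A (hBT.trans inf_le_right))
    have hZ : F ⊓ centralizer F ≤ centralizer (F ⊓ centralizer F : Subgroup G) :=
      fun x hx => mem_centralizer_iff.2 fun y hy => mem_centralizer_iff.1 hx.2 y hy.1
    have hV : A ⊔ B ≤ F ⊓ centralizer F := sup_le (le_inf hAF' hA.le_centralizer_fitting)
      (le_inf (hBT.trans (inf_le_left.trans hTF)) hB.le_centralizer_fitting)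
    obtain ⟨M, hAM, hBM, hBM'⟩ :=
      exists_complement_ge_of_sup_le_centralizer hΦ hAB (hV.trans (hZ.trans (centralizer_le hV)))
    exact hB.2.1 (eq_bot_of_le_comap_frattini_quotient (hBT.trans inf_le_left) hAM hBM hBM')
  · have hAF'' : A ⊓ F = ⊥ := not_not.1 (mt (hA.le_of_inf_ne_bot inferInstance) hAF')
    obtain ⟨B, hB, hBT⟩ := exists_isMinimalNormal_le_inf hAT hTA hTAF inferInstance
    have := hB.1
    have hBF : B ≤ F := hBT.trans inf_le_right
    have hAB : ⁅A, B⁆ = ⊥ :=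
      le_bot_iff.1 ((commutator_le_inf A B).trans (hAF'' ▸ inf_le_inf_left A hBF))
    have hAA : ⁅A, A⁆ = A := hA.2.2 _ inferInstance (commutator_le_left A A) fun h =>
      hAF' (le_fitting inferInstance ((isNilpotent_iff_lowerCentralSeries A).2 ⟨1, h⟩))
    obtain ⟨M, hAM, hBM, hBM'⟩ := exists_complement_ge_of_commutator_eq_self hΦ
      (habelian hB hBF) (commutator_eq_bot_iff_le_centralizer.1 hAB) hAA
    exact hB.2.1 (eq_bot_of_le_comap_frattini_quotient (hBT.trans inf_le_left) hAM hBM hBM')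

end FrattiniFree

theorem Subgroup.card_quotient_lt {G : Type*} [Group G] [Finite G] {N : Subgroup G}
    (hN : N ≠ ⊥) : Nat.card (G ⧸ N) < Nat.card G := by
  rw [card_eq_card_quotient_mul_card_subgroup N]
  exact lt_mul_of_one_lt_right Nat.card_pos ((one_lt_card_iff_ne_bot N).2 hN)

theorem classB_of_frattini_eq_bot {G : Type*} [Group G] [Finite G] (hΦ : frattini G = ⊥)
    (h : classB (G ⧸ fitting G)) : classB G := by
  induction hn : Nat.card G using Nat.strong_induction_on generalizing G with
  | _ n ih =>
  intro N _
  rcases eq_or_ne N ⊥ with rfl | hN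
  · exact (frattini_eq_bot_iff_of_mulEquiv (quotientBot (G := G)).symm).1 hΦ
  obtain ⟨A, hA, hAN⟩ := exists_isMinimalNormal_le inferInstance hN
  have := hA.1
  have hΦA := frattini_quotient_eq_bot_of_isMinimalNormal hΦ hA
    ((classB_quotient_iff _).1 h _ le_sup_right)
  have hB := ih _ (hn ▸ card_quotient_lt hA.2.1) hΦA (classB_quotient_fitting_quotient A h) rfl
  exact (classB_quotient_iff A).1 hB N hAN

theorem forall_frattini_quotient_eq_map_iff {G : Type*} [Group G] :
    (∀ (N : Subgroup G) [N.Normal], frattini (G ⧸ N) = (frattini G).map (mk' N)) ↔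
      classB (G ⧸ frattini G) := by
  rw [classB_quotient_iff]
  refine ⟨fun h N _ hN => by rw [h, Subgroup.map_eq_bot_iff, ker_mk']; exact hN,
    fun h N _ => le_antisymm ?_ (map_frattini_le_frattini_quotient N)⟩
  have hP : (N ⊔ frattini G).map (mk' N) = (frattini G).map (mk' N) := by
    rw [Subgroup.map_sup, (Subgroup.map_eq_bot_iff _).2 (ker_mk' N).ge, bot_sup_eq]
  exact hP ▸ frattini_le_of_frattini_quotient_eq_bot
    ((frattini_eq_bot_iff_of_mulEquiv (quotientQuotientEquivQuotient N _ le_sup_left)).2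
      (h _ le_sup_right))

/-- `Φ(G/N) = Φ(G)N/N` for all `N ⊴ G` iff `G/F(G)` has no Frattini chief factors. -/
theorem stmt_18 (G : Type*) [Group G] [Finite G] :
    (∀ (N : Subgroup G) [N.Normal],
        frattini (G ⧸ N) = (frattini G).map (QuotientGroup.mk' N)) ↔
      classB (G ⧸ fitting G) := by
  rw [forall_frattini_quotient_eq_map_iff]
  exact ⟨classB_quotient_of_le frattini_le_fitting, fun h =>
    classB_of_frattini_eq_bot frattini_quotient_frattini (classB_quotient_fitting_quotient _ h)⟩
end
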